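/- arXiv:1211.4391 — 3 statements merged into one kernel-verified Lean document; each statement's English description precedes it below -/
import Mathlib

section
/- Classical Euler–Lagrange equations with time delay (necessary condition): suppose q ∈ C¹([t₁ - τ, t₂], ℝ^d) minimizes I[q] = ∫_{t₁}^{t₂} L(t, q(t), q̇(t), q(t-τ), q̇(t-τ)) dt over C¹ functions satisfying q(t) = δ(t) on [t₁ - τ, t₁] and q(t₂) = q₂, with L of class C¹ and the map t ↦ L_{q̇}[q]_τ(t) + L_{q̇_τ}[q]_τ(t+τ) of class C¹ on [t₁, t₂-τ] and t ↦ L_{q̇}[q]_τ(t) of class C¹ on [t₂-τ, t₂]. Then d/dt [L_{q̇}[q]_τ(t) + L_{q̇_τ}[q]_τ(t+τ)] = L_q[q]_τ(t) + L_{q_τ}[q]_τ(t+τ) for t₁ ≤ t ≤ t₂ - τ, and d/dt L_{q̇}[q]_τ(t) = L_q[q]_τ(t) for t₂ - τ ≤ t ≤ t₂. -/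
/-!
Perturbing the minimizer to `q + ε η`, with `η` vanishing on `[t₁ - τ, t₁]` and at `t₂`, and
differentiating under the integral at `ε = 0` shows that the first variation vanishes. For
`η = φ • v` with a scalar test function `φ` supported in `(t₁, t₂ - τ)`, shifting the delayed terms
by `τ` turns it into `∫ (f φ + F φ') = 0`, where `F` and `f` are the two sides of the delayed
equation; for `φ` supported in `(t₂ - τ, t₂)` the delayed terms vanish outright, since
`φ (t - τ) = 0` for `t ≤ t₂`. The du Bois-Reymond lemma (if `∫ h φ' = 0` for all test functions
then `h` is constant), applied to `h = F - ∫ f`, then gives `F' = f`.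
-/

open Set intervalIntegral Topology

structure IsTestPair (a b : ℝ) (φ ψ : ℝ → ℝ) : Prop where
  hasDerivAt : ∀ t, HasDerivAt φ (ψ t) t
  continuous_deriv : Continuous ψ
  eq_zero_of_notMem : ∀ t ∉ Ioo a b, φ t = 0
  deriv_eq_zero_of_notMem : ∀ t ∉ Ioo a b, ψ t = 0

namespace IsTestPair

variable {a b : ℝ} {φ ψ : ℝ → ℝ}

theorem continuous (h : IsTestPair a b φ ψ) : Continuous φ :=
  continuous_iff_continuousAt.2 fun t => (h.hasDerivAt t).continuousAt

theorem of_integral_eq_zero (hψ : Continuous ψ) (hψ0 : ∀ t ∉ Ioo a b, ψ t = 0)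
    (hint : ∫ t in a..b, ψ t = 0) : IsTestPair a b (fun t => ∫ s in a..t, ψ s) ψ := by
  have hvanish : ∀ c d, (∀ s ∈ uIcc c d, s ∉ Ioo a b) → ∫ s in c..d, ψ s = 0 := fun c d h => by
    rw [integral_congr fun s hs => hψ0 s (h s hs), intervalIntegral.integral_zero]
  refine ⟨fun t => (hψ.integral_hasStrictDerivAt a t).hasDerivAt, hψ, fun t ht => ?_, hψ0⟩
  rcases not_and_or.1 ht with hta | hbt <;> push Not at *
  · exact hvanish a t fun s hs hs' => by
      rw [uIcc_of_ge hta] at hs; exact hs.2.not_gt hs'.1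
  · rw [← integral_add_adjacent_intervals (b := b) (hψ.intervalIntegrable _ _)
      (hψ.intervalIntegrable _ _), hint, zero_add]
    exact hvanish b t fun s hs hs' => by
      rw [uIcc_of_le hbt] at hs; exact hs.1.not_gt hs'.2

end IsTestPair

theorem eqOn_zero_of_nonneg_of_integral_eq_zero {a b : ℝ} (hab : a ≤ b) {g : ℝ → ℝ}
    (hg : Continuous g) (hg0 : ∀ t, 0 ≤ g t) (h : ∫ t in a..b, g t = 0) : EqOn g 0 (Ioo a b) := by
  have hae := (integral_eq_zero_iff_of_le_of_nonneg_ae hab (Filter.Eventually.of_forall hg0)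
    (hg.intervalIntegrable _ _)).1 h
  exact MeasureTheory.Measure.eqOn_Ioo_of_ae_eq MeasureTheory.volume
    (MeasureTheory.ae_restrict_of_ae_restrict_of_subset Ioo_subset_Ioc_self hae)
    hg.continuousOn continuousOn_const

/-- The du Bois-Reymond lemma. -/
theorem exists_eqOn_const_of_forall_isTestPair {a b : ℝ} (hab : a < b) {h : ℝ → ℝ}
    (hh : Continuous h) (H : ∀ φ ψ, IsTestPair a b φ ψ → ∫ t in a..b, h t * ψ t = 0) :
    ∃ c, EqOn h (fun _ => c) (Icc a b) := by
  set m : ℝ → ℝ := fun t => max 0 (min (t - a) (b - t))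
  have hm : Continuous m := by fun_prop
  have hm_pos : ∀ t ∈ Ioo a b, 0 < m t := fun t ht =>
    lt_max_of_lt_right (lt_min (sub_pos.2 ht.1) (sub_pos.2 ht.2))
  have hm_zero : ∀ t ∉ Ioo a b, m t = 0 := fun t ht => by
    rcases not_and_or.1 ht with hta | hbt <;> push Not at * <;> simp only [m] <;>
      apply max_eq_left
    · exact (min_le_left _ _).trans (by linarith)
    · exact (min_le_right _ _).trans (by linarith)
  have hIm : 0 < ∫ t in a..b, m t :=
    intervalIntegral_pos_of_pos_on (hm.intervalIntegrable _ _) hm_pos hab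
  -- `c` gives `ψ` mean zero, so `ψ` is the derivative of a test function; testing `h` against it
  -- yields `∫ (h - c)² m = 0`.
  set c := (∫ t in a..b, h t * m t) / ∫ t in a..b, m t
  set ψ : ℝ → ℝ := fun t => (h t - c) * m t
  have hψ : Continuous ψ := by fun_prop
  have hψ_int : ∫ t in a..b, ψ t = 0 := by
    simp only [ψ, sub_mul]
    rw [integral_sub (f := fun t => h t * m t) ((hh.mul hm).intervalIntegrable _ _)
        ((hm.const_mul c).intervalIntegrable _ _),
      integral_const_mul, div_mul_cancel₀ _ hIm.ne', sub_self]
  have hpair := IsTestPair.of_integral_eq_zero hψ (fun t ht => by simp [ψ, hm_zero t ht]) hψ_int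
  have hsq : ∫ t in a..b, (h t - c) ^ 2 * m t = 0 := by
    calc ∫ t in a..b, (h t - c) ^ 2 * m t = ∫ t in a..b, (h t * ψ t - c * ψ t) :=
          integral_congr fun t _ => by simp only [ψ]; ring
      _ = 0 := by
        rw [integral_sub (f := fun t => h t * ψ t) ((hh.mul hψ).intervalIntegrable _ _)
            ((hψ.const_mul c).intervalIntegrable _ _),
          integral_const_mul, H _ _ hpair, hψ_int, mul_zero, sub_zero]
  have hzero :=
    eqOn_zero_of_nonneg_of_integral_eq_zero hab.le (by fun_prop) (fun t => by positivity) hsq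
  have hIoo : EqOn h (fun _ => c) (Ioo a b) := fun t ht => by
    simpa only [Pi.zero_apply, mul_eq_zero, (hm_pos t ht).ne', or_false,
      pow_eq_zero_iff two_ne_zero, sub_eq_zero] using hzero ht
  refine ⟨c, ?_⟩
  simpa only [closure_Ioo hab.ne] using hIoo.closure hh continuous_const

theorem deriv_eq_of_forall_isTestPair {a b : ℝ} (hab : a < b) {f F : ℝ → ℝ} (hf : Continuous f)
    (hF : Continuous F) (hFd : ∀ t ∈ Icc a b, DifferentiableAt ℝ F t)
    (H : ∀ φ ψ, IsTestPair a b φ ψ → ∫ t in a..b, (f t * φ t + F t * ψ t) = 0) :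
    ∀ t ∈ Icc a b, deriv F t = f t := by
  set G : ℝ → ℝ := fun t => ∫ s in a..t, f s
  have hG : ∀ t, HasDerivAt G (f t) t := fun t => (hf.integral_hasStrictDerivAt a t).hasDerivAt
  have hGc : Continuous G := continuous_iff_continuousAt.2 fun t => (hG t).continuousAt
  have hFG : ∀ φ ψ, IsTestPair a b φ ψ → ∫ t in a..b, (F t - G t) * ψ t = 0 := by
    intro φ ψ hφψ
    have hφ := hφψ.continuous
    have hψ := hφψ.continuous_deriv
    -- integration by parts, with no boundary terms since `φ a = φ b = 0`
    have hibp : ∫ t in a..b, (f t * φ t + G t * ψ t) = 0 := by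
      rw [integral_eq_sub_of_hasDerivAt (fun t _ => (hG t).mul (hφψ.hasDerivAt t))
        ((by fun_prop : Continuous fun t => f t * φ t + G t * ψ t).intervalIntegrable _ _),
        Pi.mul_apply, Pi.mul_apply, hφψ.eq_zero_of_notMem a (fun h => h.1.false),
        hφψ.eq_zero_of_notMem b (fun h => h.2.false), mul_zero, mul_zero, sub_zero]
    calc ∫ t in a..b, (F t - G t) * ψ t
        = (∫ t in a..b, (f t * φ t + F t * ψ t)) - ∫ t in a..b, (f t * φ t + G t * ψ t) := by
          rw [← integral_sub (by apply Continuous.intervalIntegrable; fun_prop)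
            (by apply Continuous.intervalIntegrable; fun_prop)]
          exact integral_congr fun t _ => by ring
      _ = 0 := by rw [H φ ψ hφψ, hibp, sub_zero]
  obtain ⟨c, hc⟩ := exists_eqOn_const_of_forall_isTestPair hab (hF.sub hGc) hFG
  intro t ht
  have hFt : HasDerivWithinAt F (f t) (Icc a b) t :=
    ((hG t).add_const c).hasDerivWithinAt.congr (fun s hs => sub_eq_iff_eq_add'.1 (hc hs))
      (sub_eq_iff_eq_add'.1 (hc ht))
  exact (uniqueDiffOn_Icc hab t ht).eq_deriv _ (hFd t ht).hasDerivAt.hasDerivWithinAt hFt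

theorem integral_eq_of_forall_notMem_Ioo {a b c d : ℝ} {k : ℝ → ℝ}
    (hk : ∀ t ∉ Ioo a b, k t = 0) (hab : a ≤ b) (hca : c ≤ a) (hbd : b ≤ d) :
    ∫ t in c..d, k t = ∫ t in a..b, k t := by
  have hvanish : ∀ {s : Set ℝ}, Ioo a b ⊆ s → ∫ t in s, k t = ∫ t, k t := fun hs =>
    MeasureTheory.setIntegral_eq_integral_of_forall_compl_eq_zero fun t ht => hk t (ht ∘ (hs ·))
  rw [integral_of_le (hca.trans (hab.trans hbd)), integral_of_le hab,
    hvanish (s := Ioc c d) fun t ht => ⟨hca.trans_lt ht.1, ht.2.le.trans hbd⟩,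
    hvanish Ioo_subset_Ioc_self]

theorem integral_add_comp_sub_eq {a b t₁ t₂ τ : ℝ} {k j : ℝ → ℝ} (hk : Continuous k)
    (hj : Continuous j) (hk0 : ∀ t ∉ Ioo a b, k t = 0) (hj0 : ∀ t ∉ Ioo a b, j t = 0)
    (hab : a ≤ b) (hτ : 0 ≤ τ) (h₁ : t₁ ≤ a) (h₂ : b ≤ t₂ - τ) :
    ∫ t in t₁..t₂, (k t + j (t - τ)) = ∫ t in a..b, (k t + j t) := by
  rw [integral_add (hk.intervalIntegrable _ _)
      ((by fun_prop : Continuous fun t => j (t - τ)).intervalIntegrable _ _),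
    integral_comp_sub_right j, integral_add (hk.intervalIntegrable _ _) (hj.intervalIntegrable _ _),
    integral_eq_of_forall_notMem_Ioo hk0 hab h₁ (by linarith),
    integral_eq_of_forall_notMem_Ioo hj0 hab (by linarith) h₂]

theorem ContinuousLinearMap.map_zero_smul_smul_smul_smul {X : Type*} [NormedAddCommGroup X]
    [NormedSpace ℝ X] (T : ℝ × X × X × X × X →L[ℝ] ℝ) (v : X) (c₁ c₂ c₃ c₄ : ℝ) :
    T (0, c₁ • v, c₂ • v, c₃ • v, c₄ • v)
      = c₁ * T (0, v, 0, 0, 0) + c₂ * T (0, 0, v, 0, 0)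
        + c₃ * T (0, 0, 0, v, 0) + c₄ * T (0, 0, 0, 0, v) := by
  have h : ((0 : ℝ), c₁ • v, c₂ • v, c₃ • v, c₄ • v)
      = c₁ • ((0 : ℝ), v, (0 : X), (0 : X), (0 : X)) + c₂ • ((0 : ℝ), (0 : X), v, (0 : X), (0 : X))
        + c₃ • ((0 : ℝ), (0 : X), (0 : X), v, (0 : X))
        + c₄ • ((0 : ℝ), (0 : X), (0 : X), (0 : X), v) := by
    simp
  simp only [h, map_add, map_smul, smul_eq_mul]

theorem hasDerivAt_integral_comp_add_smul {P F : Type*} [NormedAddCommGroup P] [NormedSpace ℝ P]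
    [NormedAddCommGroup F] [NormedSpace ℝ F] {L : P → F} (hL : ContDiff ℝ 1 L) {A B : ℝ → P}
    (hA : Continuous A) (hB : Continuous B) (a b : ℝ) :
    HasDerivAt (fun ε : ℝ => ∫ t in a..b, L (A t + ε • B t))
      (∫ t in a..b, fderiv ℝ L (A t) (B t)) 0 := by
  have hL' := hL.continuous_fderiv one_ne_zero
  have hLc := hL.continuous
  obtain ⟨C, hC⟩ := (isCompact_uIcc.prod isCompact_Icc).exists_bound_of_continuousOn
    (f := fun p : ℝ × ℝ => fderiv ℝ L (A p.1 + p.2 • B p.1) (B p.1)) (s := uIcc a b ×ˢ Icc (-1) 1)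
    (by fun_prop : Continuous _).continuousOn
  have h := hasDerivAt_integral_of_dominated_loc_of_deriv_le (μ := MeasureTheory.volume)
    (bound := fun _ => C)
    (F' := fun ε t => fderiv ℝ L (A t + ε • B t) (B t))
    (Ioo_mem_nhds (neg_lt_zero.2 one_pos) one_pos)
    (Filter.Eventually.of_forall fun ε => (by fun_prop : Continuous fun t => L (A t + ε • B t))
      |>.aestronglyMeasurable)
    ((by fun_prop : Continuous fun t => L (A t + (0 : ℝ) • B t)).intervalIntegrable _ _)
    (by fun_prop : Continuous fun t => fderiv ℝ L (A t + (0 : ℝ) • B t) (B t)).aestronglyMeasurable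
    (Filter.Eventually.of_forall fun t ht ε hε =>
      hC (t, ε) ⟨uIoc_subset_uIcc ht, Ioo_subset_Icc_self hε⟩)
    intervalIntegrable_const
    (Filter.Eventually.of_forall fun t _ ε _ => by
      have hline : HasDerivAt (fun ε : ℝ => A t + ε • B t) (B t) ε := by
        simpa using ((hasDerivAt_id ε).smul_const (B t)).const_add (A t)
      exact (hL.differentiable one_ne_zero _).hasFDerivAt.comp_hasDerivAt ε hline)
  simpa only [zero_smul, add_zero] using h.2

section Delay

variable {E : Type*} [NormedAddCommGroup E] [NormedSpace ℝ E]

def IsDelayLocalMin (L : ℝ × E × E × E × E → ℝ) (t₁ t₂ τ : ℝ) (δ : ℝ → E) (q₂ : E)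
    (q q' : ℝ → E) : Prop :=
  ∃ ε > 0, ∀ r r' : ℝ → E,
      (∀ t, HasDerivAt r (r' t) t) → Continuous r' →
      (∀ t ∈ Icc (t₁ - τ) t₁, r t = δ t) → r t₂ = q₂ →
      (∀ t ∈ Icc (t₁ - τ) t₂, ‖r t - q t‖ + ‖r' t - q' t‖ ≤ ε) →
      (∫ t in t₁..t₂, L (t, q t, q' t, q (t - τ), q' (t - τ)))
        ≤ ∫ t in t₁..t₂, L (t, r t, r' t, r (t - τ), r' (t - τ))

namespace IsDelayLocalMin

variable {L : ℝ × E × E × E × E → ℝ} {t₁ t₂ τ : ℝ} {δ : ℝ → E} {q₂ : E} {q q' η η' : ℝ → E}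

theorem isLocalMin_add_smul (hmin : IsDelayLocalMin L t₁ t₂ τ δ q₂ q q')
    (hq : ∀ t, HasDerivAt q (q' t) t) (hq' : Continuous q')
    (hbd1 : ∀ t ∈ Icc (t₁ - τ) t₁, q t = δ t) (hbd2 : q t₂ = q₂)
    (hη : ∀ t, HasDerivAt η (η' t) t) (hη' : Continuous η')
    (hη0 : ∀ t ∈ Icc (t₁ - τ) t₁, η t = 0) (hη2 : η t₂ = 0) :
    IsLocalMin (fun ε : ℝ => ∫ t in t₁..t₂, L ((t, q t, q' t, q (t - τ), q' (t - τ))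
      + ε • ((0 : ℝ), η t, η' t, η (t - τ), η' (t - τ)))) 0 := by
  obtain ⟨ε₀, hε₀, hmin⟩ := hmin
  have hηc : Continuous η := continuous_iff_continuousAt.2 fun t => (hη t).continuousAt
  obtain ⟨S, hS⟩ := isCompact_Icc.exists_bound_of_continuousOn (s := Icc (t₁ - τ) t₂)
    (by fun_prop : Continuous fun t => ‖η t‖ + ‖η' t‖).continuousOn
  have hsmall : ∀ᶠ ε in 𝓝 (0 : ℝ), ‖ε‖ * S ≤ ε₀ :=
    ((by fun_prop : Continuous fun ε : ℝ => ‖ε‖ * S).tendsto' 0 0 (by simp)).eventually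
      (ge_mem_nhds hε₀)
  filter_upwards [hsmall] with ε hε
  simp only [Prod.smul_mk, Prod.mk_add_mk, smul_zero, add_zero, zero_smul]
  refine hmin (fun t => q t + ε • η t) (fun t => q' t + ε • η' t)
    (fun t => (hq t).add ((hη t).const_smul ε)) (by fun_prop)
    (fun t ht => by rw [hη0 t ht, smul_zero, add_zero, hbd1 t ht])
    (by rw [hη2, smul_zero, add_zero, hbd2]) fun t ht => ?_
  calc ‖q t + ε • η t - q t‖ + ‖q' t + ε • η' t - q' t‖ = ‖ε‖ * (‖η t‖ + ‖η' t‖) := by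
        rw [add_sub_cancel_left, add_sub_cancel_left, norm_smul, norm_smul, mul_add]
    _ ≤ ‖ε‖ * S := by gcongr; exact (Real.le_norm_self _).trans (hS t ht)
    _ ≤ ε₀ := hε

end IsDelayLocalMin

/-- `ℓ t` plays the role of `DL([q]_τ(t))`. -/
def FirstVariationVanishes (ℓ : ℝ → (ℝ × E × E × E × E →L[ℝ] ℝ)) (t₁ t₂ τ : ℝ) : Prop :=
  ∀ η η' : ℝ → E, (∀ t, HasDerivAt η (η' t) t) → Continuous η' →
    (∀ t ∈ Icc (t₁ - τ) t₁, η t = 0) → η t₂ = 0 →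
    ∫ t in t₁..t₂, ℓ t (0, η t, η' t, η (t - τ), η' (t - τ)) = 0

namespace FirstVariationVanishes

variable {ℓ : ℝ → (ℝ × E × E × E × E →L[ℝ] ℝ)} {t₁ t₂ τ : ℝ}

theorem integral_isTestPair_eq_zero (hvar : FirstVariationVanishes ℓ t₁ t₂ τ) {a b : ℝ}
    {φ ψ : ℝ → ℝ} (hφψ : IsTestPair a b φ ψ) (h₁ : t₁ ≤ a) (h₂ : b ≤ t₂) (v : E) :
    ∫ t in t₁..t₂, (φ t * ℓ t (0, v, 0, 0, 0) + ψ t * ℓ t (0, 0, v, 0, 0)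
      + φ (t - τ) * ℓ t (0, 0, 0, v, 0) + ψ (t - τ) * ℓ t (0, 0, 0, 0, v)) = 0 := by
  have hη := hvar (fun t => φ t • v) (fun t => ψ t • v) (fun t => (hφψ.hasDerivAt t).smul_const v)
    (hφψ.continuous_deriv.smul continuous_const)
    (fun t ht => by
      rw [hφψ.eq_zero_of_notMem t fun h => (h.1.trans_le (ht.2.trans h₁)).false, zero_smul])
    (by rw [hφψ.eq_zero_of_notMem t₂ fun h => (h.2.trans_le h₂).false, zero_smul])
  simpa only [ContinuousLinearMap.map_zero_smul_smul_smul_smul] using hη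

theorem eulerLagrange_delayed (hvar : FirstVariationVanishes ℓ t₁ t₂ τ) (hℓ : Continuous ℓ)
    (hτ : 0 < τ) (hlt : t₁ < t₂ - τ) (v : E)
    (hd : ∀ t ∈ Icc t₁ (t₂ - τ),
      DifferentiableAt ℝ (fun s => ℓ s (0, 0, v, 0, 0) + ℓ (s + τ) (0, 0, 0, 0, v)) t) :
    ∀ t ∈ Icc t₁ (t₂ - τ), deriv (fun s => ℓ s (0, 0, v, 0, 0) + ℓ (s + τ) (0, 0, 0, 0, v)) t
      = ℓ t (0, v, 0, 0, 0) + ℓ (t + τ) (0, 0, 0, v, 0) := by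
  refine deriv_eq_of_forall_isTestPair hlt (by fun_prop) (by fun_prop) hd fun φ ψ hφψ => ?_
  have hφ := hφψ.continuous
  have hψ := hφψ.continuous_deriv
  have hzero (g h : ℝ → ℝ) : ∀ t ∉ Ioo t₁ (t₂ - τ), φ t * g t + ψ t * h t = 0 := fun t ht => by
    rw [hφψ.eq_zero_of_notMem t ht, hφψ.deriv_eq_zero_of_notMem t ht, zero_mul, zero_mul, add_zero]
  calc ∫ t in t₁..t₂ - τ, ((ℓ t (0, v, 0, 0, 0) + ℓ (t + τ) (0, 0, 0, v, 0)) * φ t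
        + (ℓ t (0, 0, v, 0, 0) + ℓ (t + τ) (0, 0, 0, 0, v)) * ψ t)
      = ∫ t in t₁..t₂ - τ, ((φ t * ℓ t (0, v, 0, 0, 0) + ψ t * ℓ t (0, 0, v, 0, 0))
        + (φ t * ℓ (t + τ) (0, 0, 0, v, 0) + ψ t * ℓ (t + τ) (0, 0, 0, 0, v))) :=
        integral_congr fun t _ => by ring
    _ = ∫ t in t₁..t₂, ((φ t * ℓ t (0, v, 0, 0, 0) + ψ t * ℓ t (0, 0, v, 0, 0))
        + (φ (t - τ) * ℓ (t - τ + τ) (0, 0, 0, v, 0)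
          + ψ (t - τ) * ℓ (t - τ + τ) (0, 0, 0, 0, v))) :=
        (integral_add_comp_sub_eq (by fun_prop) (by fun_prop) (hzero _ _) (hzero _ _) hlt.le hτ.le
          le_rfl le_rfl).symm
    _ = 0 := by
      simp only [sub_add_cancel, ← add_assoc]
      exact hvar.integral_isTestPair_eq_zero hφψ le_rfl (by linarith) v

theorem eulerLagrange_terminal (hvar : FirstVariationVanishes ℓ t₁ t₂ τ) (hℓ : Continuous ℓ)
    (hτ : 0 < τ) (hle : t₁ ≤ t₂ - τ) (v : E)
    (hd : ∀ t ∈ Icc (t₂ - τ) t₂, DifferentiableAt ℝ (fun s => ℓ s (0, 0, v, 0, 0)) t) :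
    ∀ t ∈ Icc (t₂ - τ) t₂, deriv (fun s => ℓ s (0, 0, v, 0, 0)) t = ℓ t (0, v, 0, 0, 0) := by
  refine deriv_eq_of_forall_isTestPair (by linarith) (by fun_prop) (by fun_prop) hd
    fun φ ψ hφψ => ?_
  have hzero : ∀ t ∉ Ioo (t₂ - τ) t₂, ℓ t (0, v, 0, 0, 0) * φ t + ℓ t (0, 0, v, 0, 0) * ψ t = 0 :=
    fun t ht => by
      rw [hφψ.eq_zero_of_notMem t ht, hφψ.deriv_eq_zero_of_notMem t ht, mul_zero, mul_zero,
        add_zero]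
  have hdelay : ∀ t ∈ uIcc t₁ t₂, t - τ ∉ Ioo (t₂ - τ) t₂ := fun t ht h => by
    rw [uIcc_of_le (by linarith)] at ht
    linarith [h.1, ht.2]
  calc ∫ t in t₂ - τ..t₂, (ℓ t (0, v, 0, 0, 0) * φ t + ℓ t (0, 0, v, 0, 0) * ψ t)
      = ∫ t in t₁..t₂, (ℓ t (0, v, 0, 0, 0) * φ t + ℓ t (0, 0, v, 0, 0) * ψ t) :=
        (integral_eq_of_forall_notMem_Ioo hzero (by linarith) hle le_rfl).symm
    _ = ∫ t in t₁..t₂, (φ t * ℓ t (0, v, 0, 0, 0) + ψ t * ℓ t (0, 0, v, 0, 0)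
        + φ (t - τ) * ℓ t (0, 0, 0, v, 0) + ψ (t - τ) * ℓ t (0, 0, 0, 0, v)) :=
        integral_congr fun t ht => by
          rw [hφψ.eq_zero_of_notMem _ (hdelay t ht), hφψ.deriv_eq_zero_of_notMem _ (hdelay t ht)]
          ring
    _ = 0 := hvar.integral_isTestPair_eq_zero hφψ hle le_rfl v

end FirstVariationVanishes

theorem IsDelayLocalMin.firstVariationVanishes {L : ℝ × E × E × E × E → ℝ} {t₁ t₂ τ : ℝ}
    {δ : ℝ → E} {q₂ : E} {q q' : ℝ → E} (hmin : IsDelayLocalMin L t₁ t₂ τ δ q₂ q q')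
    (hL : ContDiff ℝ 1 L) (hq : ∀ t, HasDerivAt q (q' t) t) (hq' : Continuous q')
    (hbd1 : ∀ t ∈ Icc (t₁ - τ) t₁, q t = δ t) (hbd2 : q t₂ = q₂) :
    FirstVariationVanishes (fun t => fderiv ℝ L (t, q t, q' t, q (t - τ), q' (t - τ))) t₁ t₂ τ := by
  intro η η' hη hη' hη0 hη2
  have hqc : Continuous q := continuous_iff_continuousAt.2 fun t => (hq t).continuousAt
  have hηc : Continuous η := continuous_iff_continuousAt.2 fun t => (hη t).continuousAt
  exact (hmin.isLocalMin_add_smul hq hq' hbd1 hbd2 hη hη' hη0 hη2).hasDerivAt_eq_zero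
    (hasDerivAt_integral_comp_add_smul hL (by fun_prop) (by fun_prop) t₁ t₂)

end Delay

theorem euler_lagrange_time_delay_general
    {d : ℕ} (t₁ t₂ τ : ℝ) (hτ : 0 < τ) (hττ : τ < t₂ - t₁)
    (L : ℝ × EuclideanSpace ℝ (Fin d) × EuclideanSpace ℝ (Fin d) ×
          EuclideanSpace ℝ (Fin d) × EuclideanSpace ℝ (Fin d) → ℝ)
    (hL : ContDiff ℝ 1 L)
    (δ : ℝ → EuclideanSpace ℝ (Fin d)) (q₂ : EuclideanSpace ℝ (Fin d))
    (q q' : ℝ → EuclideanSpace ℝ (Fin d))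
    (hq : ∀ t, HasDerivAt q (q' t) t) (hq' : Continuous q')
    -- the delayed argument tuple [q]_τ(t)
    (A : ℝ → ℝ × EuclideanSpace ℝ (Fin d) × EuclideanSpace ℝ (Fin d) ×
          EuclideanSpace ℝ (Fin d) × EuclideanSpace ℝ (Fin d))
    (hA : A = fun s => (s, q s, q' s, q (s - τ), q' (s - τ)))
    -- admissibility of q
    (hbd1 : ∀ t ∈ Set.Icc (t₁ - τ) t₁, q t = δ t) (hbd2 : q t₂ = q₂)
    -- local minimality of q in the C¹ topology
    (hmin : ∃ ε > 0, ∀ r r' : ℝ → EuclideanSpace ℝ (Fin d),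
      (∀ t, HasDerivAt r (r' t) t) → Continuous r' →
      (∀ t ∈ Set.Icc (t₁ - τ) t₁, r t = δ t) → r t₂ = q₂ →
      (∀ t ∈ Set.Icc (t₁ - τ) t₂, ‖r t - q t‖ + ‖r' t - q' t‖ ≤ ε) →
      (∫ t in t₁..t₂, L (t, q t, q' t, q (t - τ), q' (t - τ)))
        ≤ ∫ t in t₁..t₂, L (t, r t, r' t, r (t - τ), r' (t - τ)))
    -- C¹ regularity of the delayed momentum maps
    (hC1a : ∀ v : EuclideanSpace ℝ (Fin d), ∀ t ∈ Set.Icc t₁ (t₂ - τ),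
      DifferentiableAt ℝ
        (fun s => fderiv ℝ L (A s) (0, 0, v, 0, 0)
          + fderiv ℝ L (A (s + τ)) (0, 0, 0, 0, v)) t)
    (hC1b : ∀ v : EuclideanSpace ℝ (Fin d), ∀ t ∈ Set.Icc (t₂ - τ) t₂,
      DifferentiableAt ℝ (fun s => fderiv ℝ L (A s) (0, 0, v, 0, 0)) t) :
    (∀ t ∈ Set.Icc t₁ (t₂ - τ), ∀ v : EuclideanSpace ℝ (Fin d),
      deriv (fun s => fderiv ℝ L (A s) (0, 0, v, 0, 0)
          + fderiv ℝ L (A (s + τ)) (0, 0, 0, 0, v)) t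
        = fderiv ℝ L (A t) (0, v, 0, 0, 0)
          + fderiv ℝ L (A (t + τ)) (0, 0, 0, v, 0)) ∧
    (∀ t ∈ Set.Icc (t₂ - τ) t₂, ∀ v : EuclideanSpace ℝ (Fin d),
      deriv (fun s => fderiv ℝ L (A s) (0, 0, v, 0, 0)) t
        = fderiv ℝ L (A t) (0, v, 0, 0, 0)) := by
  have hqc : Continuous q := continuous_iff_continuousAt.2 fun t => (hq t).continuousAt
  subst hA
  have hℓ : Continuous fun s => fderiv ℝ L (s, q s, q' s, q (s - τ), q' (s - τ)) :=
    (hL.continuous_fderiv one_ne_zero).comp (by fun_prop)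
  have hvar := IsDelayLocalMin.firstVariationVanishes hmin hL hq hq' hbd1 hbd2
  exact ⟨fun t ht v => hvar.eulerLagrange_delayed hℓ hτ (by linarith) v (hC1a v) t ht,
    fun t ht v => hvar.eulerLagrange_terminal hℓ hτ (by linarith) v (hC1b v) t ht⟩

/-- Classical Euler–Lagrange equations with time delay (necessary condition).
`E = ℝ^d`, `L(t, q, q̇, q_τ, q̇_τ)` is `C¹`; partial derivatives in the various slots
are expressed through `fderiv` of `L` applied to vectors supported in one slot.
If `q` is a local minimizer (in the `C¹` topology) among admissible curves, then the
delayed Euler–Lagrange equations hold on `[t₁, t₂-τ]` and on `[t₂-τ, t₂]`. -/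
theorem euler_lagrange_time_delay
    {d : ℕ} (t₁ t₂ τ : ℝ) (ht : t₁ < t₂) (hτ : 0 < τ) (hττ : τ < t₂ - t₁)
    (L : ℝ × EuclideanSpace ℝ (Fin d) × EuclideanSpace ℝ (Fin d) ×
          EuclideanSpace ℝ (Fin d) × EuclideanSpace ℝ (Fin d) → ℝ)
    (hL : ContDiff ℝ 1 L)
    (δ : ℝ → EuclideanSpace ℝ (Fin d)) (q₂ : EuclideanSpace ℝ (Fin d))
    (q q' : ℝ → EuclideanSpace ℝ (Fin d))
    (hq : ∀ t, HasDerivAt q (q' t) t) (hq' : Continuous q')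
    -- the delayed argument tuple [q]_τ(t)
    (A : ℝ → ℝ × EuclideanSpace ℝ (Fin d) × EuclideanSpace ℝ (Fin d) ×
          EuclideanSpace ℝ (Fin d) × EuclideanSpace ℝ (Fin d))
    (hA : A = fun s => (s, q s, q' s, q (s - τ), q' (s - τ)))
    -- admissibility of q
    (hbd1 : ∀ t ∈ Set.Icc (t₁ - τ) t₁, q t = δ t) (hbd2 : q t₂ = q₂)
    -- local minimality of q in the C¹ topology
    (hmin : ∃ ε > 0, ∀ r r' : ℝ → EuclideanSpace ℝ (Fin d),
      (∀ t, HasDerivAt r (r' t) t) → Continuous r' →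
      (∀ t ∈ Set.Icc (t₁ - τ) t₁, r t = δ t) → r t₂ = q₂ →
      (∀ t ∈ Set.Icc (t₁ - τ) t₂, ‖r t - q t‖ + ‖r' t - q' t‖ ≤ ε) →
      (∫ t in t₁..t₂, L (t, q t, q' t, q (t - τ), q' (t - τ)))
        ≤ ∫ t in t₁..t₂, L (t, r t, r' t, r (t - τ), r' (t - τ)))
    -- C¹ regularity of the delayed momentum maps
    (hC1a : ∀ v : EuclideanSpace ℝ (Fin d), ∀ t ∈ Set.Icc t₁ (t₂ - τ),
      DifferentiableAt ℝ
        (fun s => fderiv ℝ L (A s) (0, 0, v, 0, 0)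
          + fderiv ℝ L (A (s + τ)) (0, 0, 0, 0, v)) t)
    (hC1b : ∀ v : EuclideanSpace ℝ (Fin d), ∀ t ∈ Set.Icc (t₂ - τ) t₂,
      DifferentiableAt ℝ (fun s => fderiv ℝ L (A s) (0, 0, v, 0, 0)) t) :
    (∀ t ∈ Set.Icc t₁ (t₂ - τ), ∀ v : EuclideanSpace ℝ (Fin d),
      deriv (fun s => fderiv ℝ L (A s) (0, 0, v, 0, 0)
          + fderiv ℝ L (A (s + τ)) (0, 0, 0, 0, v)) t
        = fderiv ℝ L (A t) (0, v, 0, 0, 0)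
          + fderiv ℝ L (A (t + τ)) (0, 0, 0, v, 0)) ∧
    (∀ t ∈ Set.Icc (t₂ - τ) t₂, ∀ v : EuclideanSpace ℝ (Fin d),
      deriv (fun s => fderiv ℝ L (A s) (0, 0, v, 0, 0)) t
        = fderiv ℝ L (A t) (0, v, 0, 0, 0)) :=
  euler_lagrange_time_delay_general t₁ t₂ τ hτ hττ L hL δ q₂ q q' hq hq' A hA hbd1 hbd2 hmin hC1a
    hC1b
end

section
/- First variation formula with time delay: for L of class C¹ and q, h ∈ C¹([t₁ - τ, t₂], ℝ^d) with h ≡ 0 on [t₁ - τ, t₁], the Gateaux derivative of I[q] = ∫_{t₁}^{t₂} L(t, q, q̇, q∘ρ^τ, q̇∘ρ^τ) dt at q in direction h equals ∫_{t₁}^{t₂-τ} [(L_q[q]_τ(t) + L_{q_τ}[q]_τ(t+τ))·h(t) + (L_{q̇}[q]_τ(t) + L_{q̇_τ}[q]_τ(t+τ))·ḣ(t)] dt + ∫_{t₂-τ}^{t₂} [L_q[q]_τ(t)·h(t) + L_{q̇}[q]_τ(t)·ḣ(t)] dt. -/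
open Set intervalIntegral

/-!
Perturbing `q` by `ε • h` moves the argument of `L` along the affine path `[q]_τ + ε • v` with
`v t = (0, h t, ḣ t, h (t - τ), ḣ (t - τ))`, so the Leibniz rule gives the derivative
`∫_{t₁}^{t₂} dL([q]_τ t) (v t) dt`. Splitting `v` into its undelayed and delayed slots and shifting
the delayed part by `τ` turns this into an integral over `[t₁ - τ, t₂ - τ]`, whose piece over
`[t₁ - τ, t₁]` vanishes because `h` and hence `ḣ` vanish there.
-/

theorem hasDerivAt_intervalIntegral_of_continuous {E : Type*} [NormedAddCommGroup E]
    [NormedSpace ℝ E] {F F' : ℝ → ℝ → E} (hF : Continuous (Function.uncurry F))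
    (hF' : Continuous (Function.uncurry F')) (hderiv : ∀ x t, HasDerivAt (F · t) (F' x t) x)
    (a b x₀ : ℝ) :
    HasDerivAt (fun x => ∫ t in a..b, F x t) (∫ t in a..b, F' x₀ t) x₀ := by
  obtain ⟨C, hC⟩ := ((isCompact_closedBall x₀ 1).prod isCompact_uIcc).exists_bound_of_continuousOn
    hF'.continuousOn
  have hF_cont : ∀ x, Continuous (F x) := fun x => hF.comp (Continuous.prodMk_right x)
  refine (hasDerivAt_integral_of_dominated_loc_of_deriv_le (bound := fun _ => C)
    (Metric.ball_mem_nhds x₀ one_pos)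
    (Filter.Eventually.of_forall fun x => (hF_cont x).aestronglyMeasurable)
    ((hF_cont x₀).intervalIntegrable a b)
    (hF'.comp (Continuous.prodMk_right x₀)).aestronglyMeasurable
    (Filter.Eventually.of_forall fun t ht x hx =>
      hC (x, t) ⟨Metric.ball_subset_closedBall hx, uIoc_subset_uIcc ht⟩)
    intervalIntegrable_const
    (Filter.Eventually.of_forall fun t _ x _ => hderiv x t)).2

theorem hasDerivAt_intervalIntegral_comp_add_smul {X E : Type*} [NormedAddCommGroup X]
    [NormedSpace ℝ X] [NormedAddCommGroup E] [NormedSpace ℝ E] {L : X → E} (hL : ContDiff ℝ 1 L)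
    {Q H : ℝ → X} (hQ : Continuous Q) (hH : Continuous H) (a b : ℝ) :
    HasDerivAt (fun ε : ℝ => ∫ t in a..b, L (Q t + ε • H t))
      (∫ t in a..b, fderiv ℝ L (Q t) (H t)) 0 := by
  have hpath : Continuous fun p : ℝ × ℝ => Q p.2 + p.1 • H p.2 := by fun_prop
  have hderiv : ∀ ε t, HasDerivAt (fun ε : ℝ => L (Q t + ε • H t))
      (fderiv ℝ L (Q t + ε • H t) (H t)) ε := fun ε t =>
    ((hL.differentiable one_ne_zero _).hasFDerivAt).comp_hasDerivAt ε
      (((hasDerivAt_id ε).smul_const (H t)).const_add (Q t) |>.congr_deriv (one_smul ℝ _))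
  simpa using hasDerivAt_intervalIntegral_of_continuous
    (F := fun ε t => L (Q t + ε • H t)) (F' := fun ε t => fderiv ℝ L (Q t + ε • H t) (H t))
    (hL.continuous.comp hpath)
    (((hL.continuous_fderiv one_ne_zero).comp hpath).clm_apply (hH.comp continuous_snd))
    hderiv a b 0

theorem HasDerivAt.eq_zero_of_eqOn_zero {E : Type*} [NormedAddCommGroup E] [NormedSpace ℝ E]
    {f : ℝ → E} {f' : E} {a b t : ℝ} (hab : a < b) (hf : HasDerivAt f f' t)
    (h0 : EqOn f 0 (Icc a b)) (ht : t ∈ Icc a b) : f' = 0 :=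
  (uniqueDiffOn_Icc hab t ht).eq_deriv _ hf.hasDerivWithinAt
    ((hasDerivWithinAt_const t _ 0).congr (fun _ hy => h0 hy) (h0 ht))

theorem integral_add_comp_sub_of_eqOn_zero {E : Type*} [NormedAddCommGroup E] [NormedSpace ℝ E]
    {P Q : ℝ → E} (hP : Continuous P) (hQ : Continuous Q) {a b τ : ℝ}
    (hQ0 : EqOn Q 0 (uIcc (a - τ) a)) :
    ∫ t in a..b, (P t + Q (t - τ)) =
      (∫ t in a..(b - τ), (P t + Q t)) + ∫ t in (b - τ)..b, P t := by
  have hP_int : ∀ u v, IntervalIntegrable P MeasureTheory.volume u v :=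
    fun u v => hP.intervalIntegrable u v
  have hQ_int : ∀ u v, IntervalIntegrable Q MeasureTheory.volume u v :=
    fun u v => hQ.intervalIntegrable u v
  have hQ_shift : ∫ t in a..b, Q (t - τ) = ∫ t in a..(b - τ), Q t := by
    rw [integral_comp_sub_right Q τ, ← integral_add_adjacent_intervals (hQ_int _ a) (hQ_int a _),
      integral_congr hQ0]
    simp only [Pi.zero_apply, integral_zero, zero_add]
  have hQτ_int : IntervalIntegrable (fun t => Q (t - τ)) MeasureTheory.volume a b :=
    (hQ.comp (continuous_sub_right τ)).intervalIntegrable a b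
  rw [integral_add (hP_int a b) hQτ_int,
    integral_add (hP_int a _) (hQ_int a _), hQ_shift,
    ← integral_add_adjacent_intervals (hP_int a (b - τ)) (hP_int _ b)]
  abel

theorem first_variation_time_delay_general
    {d : ℕ} (t₁ t₂ τ : ℝ) (hτ : 0 < τ)
    (L : ℝ × EuclideanSpace ℝ (Fin d) × EuclideanSpace ℝ (Fin d) ×
          EuclideanSpace ℝ (Fin d) × EuclideanSpace ℝ (Fin d) → ℝ)
    (hL : ContDiff ℝ 1 L)
    (q q' h h' : ℝ → EuclideanSpace ℝ (Fin d))
    (hq : ∀ t, HasDerivAt q (q' t) t) (hq' : Continuous q')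
    (hh : ∀ t, HasDerivAt h (h' t) t) (hh' : Continuous h')
    (hh0 : ∀ t ∈ Set.Icc (t₁ - τ) t₁, h t = 0)
    (A : ℝ → ℝ × EuclideanSpace ℝ (Fin d) × EuclideanSpace ℝ (Fin d) ×
          EuclideanSpace ℝ (Fin d) × EuclideanSpace ℝ (Fin d))
    (hA : A = fun s => (s, q s, q' s, q (s - τ), q' (s - τ))) :
    HasDerivAt
      (fun ε : ℝ => ∫ t in t₁..t₂,
        L (t, q t + ε • h t, q' t + ε • h' t,
            q (t - τ) + ε • h (t - τ), q' (t - τ) + ε • h' (t - τ)))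
      ((∫ t in t₁..(t₂ - τ),
          (fderiv ℝ L (A t) (0, h t, h' t, 0, 0)
            + fderiv ℝ L (A (t + τ)) (0, 0, 0, h t, h' t)))
        + ∫ t in (t₂ - τ)..t₂, fderiv ℝ L (A t) (0, h t, h' t, 0, 0))
      0 := by
  have hqc : Continuous q := continuous_iff_continuousAt.mpr fun t => (hq t).continuousAt
  have hhc : Continuous h := continuous_iff_continuousAt.mpr fun t => (hh t).continuousAt
  have hAc : Continuous A := hA ▸ by fun_prop
  have hL'c : Continuous (fderiv ℝ L) := hL.continuous_fderiv one_ne_zero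
  have hdelayed_zero : EqOn (fun t => fderiv ℝ L (A (t + τ)) (0, 0, 0, h t, h' t)) 0
      (uIcc (t₁ - τ) t₁) := by
    intro t ht
    rw [uIcc_of_le (by linarith)] at ht
    have hh't : h' t = 0 := (hh t).eq_zero_of_eqOn_zero (by linarith) hh0 ht
    simp only [Pi.zero_apply, hh0 t ht, hh't]
    exact map_zero _
  have hvariation := hasDerivAt_intervalIntegral_comp_add_smul hL hAc
    (H := fun t => ((0 : ℝ), h t, h' t, h (t - τ), h' (t - τ))) (by fun_prop) t₁ t₂
  have hperturb : ∀ ε t : ℝ, A t + ε • ((0 : ℝ), h t, h' t, h (t - τ), h' (t - τ)) =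
      (t, q t + ε • h t, q' t + ε • h' t, q (t - τ) + ε • h (t - τ), q' (t - τ) + ε • h' (t - τ)) :=
    fun ε t => by simp [hA]
  have hsplit : ∀ t, fderiv ℝ L (A t) ((0 : ℝ), h t, h' t, h (t - τ), h' (t - τ)) =
      fderiv ℝ L (A t) (0, h t, h' t, 0, 0) +
        fderiv ℝ L (A (t - τ + τ)) (0, 0, 0, h (t - τ), h' (t - τ)) := fun t => by
    rw [sub_add_cancel, ← map_add]
    simp
  simp only [hperturb, hsplit] at hvariation
  rwa [← integral_add_comp_sub_of_eqOn_zero (b := t₂) (by fun_prop) (by fun_prop) hdelayed_zero]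

/-- First variation formula with time delay: the Gateaux derivative of the delayed
action functional at `q` in a direction `h` vanishing on `[t₁-τ, t₁]` equals the sum
of the two stated integrals (partial derivatives of `L` are encoded by `fderiv` of
`L` applied to vectors supported in the corresponding slots). -/
theorem first_variation_time_delay
    {d : ℕ} (t₁ t₂ τ : ℝ) (ht : t₁ < t₂) (hτ : 0 < τ) (hττ : τ < t₂ - t₁)
    (L : ℝ × EuclideanSpace ℝ (Fin d) × EuclideanSpace ℝ (Fin d) ×
          EuclideanSpace ℝ (Fin d) × EuclideanSpace ℝ (Fin d) → ℝ)
    (hL : ContDiff ℝ 1 L)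
    (q q' h h' : ℝ → EuclideanSpace ℝ (Fin d))
    (hq : ∀ t, HasDerivAt q (q' t) t) (hq' : Continuous q')
    (hh : ∀ t, HasDerivAt h (h' t) t) (hh' : Continuous h')
    (hh0 : ∀ t ∈ Set.Icc (t₁ - τ) t₁, h t = 0)
    (A : ℝ → ℝ × EuclideanSpace ℝ (Fin d) × EuclideanSpace ℝ (Fin d) ×
          EuclideanSpace ℝ (Fin d) × EuclideanSpace ℝ (Fin d))
    (hA : A = fun s => (s, q s, q' s, q (s - τ), q' (s - τ))) :
    HasDerivAt
      (fun ε : ℝ => ∫ t in t₁..t₂,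
        L (t, q t + ε • h t, q' t + ε • h' t,
            q (t - τ) + ε • h (t - τ), q' (t - τ) + ε • h' (t - τ)))
      ((∫ t in t₁..(t₂ - τ),
          (fderiv ℝ L (A t) (0, h t, h' t, 0, 0)
            + fderiv ℝ L (A (t + τ)) (0, 0, 0, h t, h' t)))
        + ∫ t in (t₂ - τ)..t₂, fderiv ℝ L (A t) (0, h t, h' t, 0, 0))
      0 :=
  first_variation_time_delay_general t₁ t₂ τ hτ L hL q q' h h' hq hq' hh hh' hh0 A hA
end

section
/- Barrow rule for the quantum derivative in the differentiable case: if f ∈ C¹([t₁, t₂], ℝ), then ∫_{t₁}^{t₂} □_ε f(t) dt → f(t₂) - f(t₁) as ε → 0⁺, where □_ε f is the ε-scale derivative and the integral is of the complex-valued function □_ε f (extended continuously to the endpoints using one-sided quantum derivatives where needed). -/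
/-!
The integral of a forward difference quotient telescopes:
`∫_c^d (g (t + ε) - g t) / ε dt = ⨍_d^{d+ε} g - ⨍_c^{c+ε} g`, a difference of averages over
intervals of length `ε` that shrink to the endpoints, so it tends to `g d - g c` for continuous
`g`. The backward quotient is a shifted forward one, and `□_ε` combines the two with
coefficients `(1 ∓ i) / 2` summing to `1`. Extending `f` continuously off `[t₁, t₂]` changes
nothing once `2 ε < t₂ - t₁`.
-/

open Set Filter Topology intervalIntegral
open scoped fwdDiff

section
variable {E : Type*} [NormedAddCommGroup E] [NormedSpace ℝ E] {g : ℝ → E}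

theorem integral_fwdDiff_eq_sub (hg : Continuous g) (h c d : ℝ) :
    ∫ t in c..d, Δ_[h] g t = (∫ t in d..d + h, g t) - ∫ t in c..c + h, g t := by
  have hi (a b : ℝ) : IntervalIntegrable g MeasureTheory.volume a b := hg.intervalIntegrable a b
  have hshift : Continuous fun t => g (t + h) := hg.comp (continuous_add_const h)
  simp only [fwdDiff]
  rw [integral_sub (hshift.intervalIntegrable _ _) (hi _ _),
    integral_comp_add_right, integral_interval_sub_interval_comm' (hi _ _) (hi _ _) (hi _ _)]

theorem tendsto_inv_smul_integral_shift [CompleteSpace E] (hg : Continuous g) (x c : ℝ) :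
    Tendsto (fun ε : ℝ => ε⁻¹ • ∫ t in (x + c * ε)..(x + c * ε + ε), g t) (𝓝[≠] 0)
      (𝓝 (g x)) := by
  set G : ℝ → E := fun y => ∫ t in x..y, g t
  have hG (y : ℝ) : HasDerivAt G (g y) y := (hg.integral_hasStrictDerivAt x y).hasDerivAt
  have hpath (k : ℝ) : HasDerivAt (fun ε => G (x + k * ε)) (k • g x) 0 := by
    have h := (hG x).scomp_of_eq 0 (((hasDerivAt_id (0 : ℝ)).const_mul k).const_add x) (by simp)
    rw [mul_one] at h
    exact h
  have := ((hpath (c + 1)).sub (hpath c)).tendsto_slope_zero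
  rw [add_smul, one_smul, add_sub_cancel_left] at this
  refine this.congr fun ε => ?_
  simp only [Pi.sub_apply, zero_add, mul_zero, add_zero, sub_self, sub_zero, G]
  rw [integral_interval_sub_left (hg.intervalIntegrable _ _) (hg.intervalIntegrable _ _),
    add_one_mul, add_assoc]

theorem tendsto_inv_smul_integral_fwdDiff [CompleteSpace E] (hg : Continuous g) (a b p q : ℝ) :
    Tendsto (fun ε : ℝ => ε⁻¹ • ∫ t in (a + p * ε)..(b + q * ε), Δ_[ε] g t) (𝓝[≠] 0)
      (𝓝 (g b - g a)) := by
  simp only [integral_fwdDiff_eq_sub hg, smul_sub]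
  exact (tendsto_inv_smul_integral_shift hg b q).sub (tendsto_inv_smul_integral_shift hg a p)

end

/-- The `ε`-scale derivative `□_ε g t`; `Δ_[ε] g (t - ε) = g t - g (t - ε)` is the backward
difference. -/
noncomputable def scaleDeriv (g : ℝ → ℂ) (ε t : ℝ) : ℂ :=
  (1 / 2 : ℂ) * ((ε⁻¹ • Δ_[ε] g t + ε⁻¹ • Δ_[ε] g (t - ε))
    - Complex.I * (ε⁻¹ • Δ_[ε] g t - ε⁻¹ • Δ_[ε] g (t - ε)))

-- Bounds in the shape `a + p * ε` of `tendsto_inv_smul_integral_fwdDiff`.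
theorem integral_scaleDeriv {g : ℝ → ℂ} (hg : Continuous g) (a b ε : ℝ) :
    ∫ t in (a + ε)..(b - ε), scaleDeriv g ε t =
      (1 - Complex.I) / 2 * ε⁻¹ • (∫ t in (a + 1 * ε)..(b + -1 * ε), Δ_[ε] g t)
        + (1 + Complex.I) / 2 * ε⁻¹ • (∫ t in (a + 0 * ε)..(b + -2 * ε), Δ_[ε] g t) := by
  have hΔ : Continuous (Δ_[ε] g) := (hg.comp (continuous_add_const ε)).sub hg
  have hΔ' : Continuous fun t => Δ_[ε] g (t - ε) := hΔ.comp (continuous_sub_right ε)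
  have hsplit (t : ℝ) : scaleDeriv g ε t =
      (1 - Complex.I) / 2 * ε⁻¹ • Δ_[ε] g t + (1 + Complex.I) / 2 * ε⁻¹ • Δ_[ε] g (t - ε) := by
    simp only [scaleDeriv, Complex.real_smul]
    ring
  simp only [hsplit]
  rw [integral_add, integral_const_mul, integral_const_mul, integral_smul, integral_smul,
    integral_comp_sub_right]
  · ring_nf
  · exact (continuous_const.mul (hΔ.const_smul ε⁻¹)).intervalIntegrable _ _
  · exact (continuous_const.mul (hΔ'.const_smul ε⁻¹)).intervalIntegrable _ _

theorem tendsto_integral_scaleDeriv {g : ℝ → ℂ} (hg : Continuous g) (a b : ℝ) :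
    Tendsto (fun ε => ∫ t in (a + ε)..(b - ε), scaleDeriv g ε t) (𝓝[≠] 0) (𝓝 (g b - g a)) := by
  simp only [integral_scaleDeriv hg]
  convert ((tendsto_inv_smul_integral_fwdDiff hg a b 1 (-1)).const_mul _).add
    ((tendsto_inv_smul_integral_fwdDiff hg a b 0 (-2)).const_mul _) using 2
  ring

theorem quantum_barrow_rule_C1_general
    (t₁ t₂ : ℝ) (ht : t₁ < t₂) (f f' : ℝ → ℝ)
    (hf : ∀ s ∈ Set.Icc t₁ t₂, HasDerivWithinAt f (f' s) (Set.Icc t₁ t₂) s) :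
    Tendsto
      (fun ε : ℝ => ∫ t in (t₁ + ε)..(t₂ - ε),
        ((1 / 2 : ℂ) *
          (((((f (t + ε) - f t) / ε) + ((f t - f (t - ε)) / ε) : ℝ) : ℂ)
            - Complex.I *
              ((((f (t + ε) - f t) / ε) - ((f t - f (t - ε)) / ε) : ℝ) : ℂ))))
      (𝓝[>] (0 : ℝ)) (𝓝 ((f t₂ - f t₁ : ℝ) : ℂ)) := by
  have hfc : ContinuousOn f (Icc t₁ t₂) := fun s hs => (hf s hs).continuousWithinAt
  set g : ℝ → ℂ := fun x => (IccExtend ht.le ((Icc t₁ t₂).domRestrict f) x : ℝ)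
  have hg : Continuous g :=
    Complex.continuous_ofReal.comp (continuousOn_iff_continuous_domRestrict.1 hfc).Icc_extend'
  have hgf {x : ℝ} (hx : x ∈ Icc t₁ t₂) : g x = f x := by simp [g, IccExtend_of_mem _ _ hx]
  have hlim := (tendsto_integral_scaleDeriv hg t₁ t₂).mono_left (nhdsGT_le_nhdsNE 0)
  rw [hgf (left_mem_Icc.2 ht.le), hgf (right_mem_Icc.2 ht.le), ← Complex.ofReal_sub] at hlim
  refine hlim.congr' ?_
  filter_upwards [Ioo_mem_nhdsGT (half_pos (sub_pos.2 ht))] with ε ⟨hε0, hε⟩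
  refine integral_congr fun t htε => ?_
  rw [uIcc_of_le (by linarith)] at htε
  obtain ⟨ht₁, ht₂⟩ := htε
  simp only [scaleDeriv, fwdDiff, sub_add_cancel, Complex.real_smul,
    hgf ⟨(by linarith : t₁ ≤ t + ε), (by linarith : t + ε ≤ t₂)⟩,
    hgf ⟨(by linarith : t₁ ≤ t), (by linarith : t ≤ t₂)⟩,
    hgf ⟨(by linarith : t₁ ≤ t - ε), (by linarith : t - ε ≤ t₂)⟩]
  push_cast
  ring

/-- Barrow rule for the quantum derivative in the differentiable case:
if `f ∈ C¹([t₁,t₂], ℝ)` then `∫_{t₁+ε}^{t₂-ε} □_ε f(t) dt → f(t₂) - f(t₁)` in `ℂ`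
as `ε → 0⁺`, where `□_ε f` is the ε-scale derivative. -/
theorem quantum_barrow_rule_C1
    (t₁ t₂ : ℝ) (ht : t₁ < t₂) (f f' : ℝ → ℝ)
    (hf : ∀ s ∈ Set.Icc t₁ t₂, HasDerivWithinAt f (f' s) (Set.Icc t₁ t₂) s)
    (hf' : ContinuousOn f' (Set.Icc t₁ t₂)) :
    Tendsto
      (fun ε : ℝ => ∫ t in (t₁ + ε)..(t₂ - ε),
        ((1 / 2 : ℂ) *
          (((((f (t + ε) - f t) / ε) + ((f t - f (t - ε)) / ε) : ℝ) : ℂ)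
            - Complex.I *
              ((((f (t + ε) - f t) / ε) - ((f t - f (t - ε)) / ε) : ℝ) : ℂ))))
      (𝓝[>] (0 : ℝ)) (𝓝 ((f t₂ - f t₁ : ℝ) : ℂ)) :=
  quantum_barrow_rule_C1_general t₁ t₂ ht f f' hf
end
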